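/- The Hermitian lattice ⟨1,1,1⟩ over ℚ(√−15) is universal: the integral quadratic form x₁² + x₁x₂ + 4x₂² + y₁² + y₁y₂ + 4y₂² + z₁² + z₁z₂ + 4z₂² in six integer variables represents every positive integer. -/

import Mathlib

/-!
The binary form `x² + xy + 4y²` takes the value `x²` at `(x, 0)` and `x² + 15` at `(x - 1, 2)`.
So whenever `k` is a sum of three squares, both `k` and `k + 30` are values of the six-variable
form. An integer `n` with `n % 4 ≠ 0` is a sum of three squares unless `n ≡ 7 mod 8`, and then
`n - 30 ≡ 1 mod 8` is one (for `n ≥ 31`; `7, 15, 23` are done by hand); multiples of `4` come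
from `n / 4` by doubling all variables.

Legendre's theorem for `n ≡ 1, 2 mod 4` and `n ≡ 3 mod 8` is proved as in Gauss and Nathanson.
Dirichlet's theorem gives `d > 0` with `-d` a square modulo `n d - 1`, which produces a positive
definite integral ternary form of determinant `1` representing `n`. Every value of such a form is a
sum of three squares: a minimal vector is primitive, so it can be made the first basis vector; then
the complementary binary form, of determinant `m` (the minimum), has minimum at least `3 m² / 4`,
and Hermite's bound `3 μ² ≤ 4 D` for binary forms forces `m = 1`.
-/

open Matrix

def IsPrimitiveVector {n : Type*} (v : n → ℤ) : Prop :=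
  ∀ g : ℤ, (∀ i, g ∣ v i) → IsUnit g

theorem exists_isCoprime_mul (x y : ℤ) :
    ∃ g x₁ y₁ : ℤ, IsCoprime x₁ y₁ ∧ x = g * x₁ ∧ y = g * y₁ := by
  by_cases h : x = 0 ∧ y = 0
  · exact ⟨0, 1, 0, isCoprime_one_left, by simp [h.1], by simp [h.2]⟩
  · obtain ⟨g, x₁, y₁, -, hg, rfl, rfl⟩ :=
      Int.exists_gcd_one' (Int.gcd_pos_iff.2 (not_and_or.1 h))
    exact ⟨g, x₁, y₁, Int.isCoprime_iff_gcd_eq_one.2 hg, mul_comm _ _, mul_comm _ _⟩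

theorem IsPrimitiveVector.exists_isUnit_det_fin_two {v : Fin 2 → ℤ} (hv : IsPrimitiveVector v) :
    ∃ T : Matrix (Fin 2) (Fin 2) ℤ, IsUnit T.det ∧ T *ᵥ Pi.single 0 1 = v := by
  obtain ⟨a, b, hab⟩ : IsCoprime (v 0) (v 1) :=
    IsRelPrime.isCoprime fun g h0 h1 ↦ hv g (Fin.forall_fin_two.2 ⟨h0, h1⟩)
  refine ⟨!![v 0, -b; v 1, a], ?_, ?_⟩
  · rw [det_fin_two_of, show v 0 * a - -b * v 1 = 1 by linear_combination hab]
    exact isUnit_one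
  · ext i; fin_cases i <;> simp

theorem IsPrimitiveVector.exists_isUnit_det_fin_three {v : Fin 3 → ℤ}
    (hv : IsPrimitiveVector v) :
    ∃ T : Matrix (Fin 3) (Fin 3) ℤ, IsUnit T.det ∧ T *ᵥ Pi.single 0 1 = v := by
  obtain ⟨g, x₁, y₁, ⟨a, b, hab⟩, hx, hy⟩ := exists_isCoprime_mul (v 0) (v 1)
  obtain ⟨u, w, huw⟩ : IsCoprime g (v 2) := IsRelPrime.isCoprime fun d hg h2 ↦
    hv d (Fin.forall_fin_succ.2 ⟨hx ▸ hg.mul_right _, Fin.forall_fin_two.2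
      ⟨hy ▸ hg.mul_right _, h2⟩⟩)
  refine ⟨!![v 0, -b, -w * x₁; v 1, a, -w * y₁; v 2, 0, u], ?_, ?_⟩
  · rw [show (!![v 0, -b, -w * x₁; v 1, a, -w * y₁; v 2, 0, u]).det = 1 by
      simp only [det_fin_three, of_apply, cons_val', cons_val_zero, cons_val_one, cons_val,
        cons_val_fin_one, hx, hy]
      linear_combination (u * g + w * v 2) * hab + huw]
    exact isUnit_one
  · ext i; fin_cases i <;> simp

theorem exists_four_mul_sq_le (b m : ℤ) (hm : 0 < m) : ∃ k : ℤ, 4 * (b + k * m) ^ 2 ≤ m ^ 2 := by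
  have hr := Int.emod_add_mul_ediv b m
  have h0 := Int.emod_nonneg b hm.ne'
  have h1 := Int.emod_lt_of_pos b hm
  by_cases h : 2 * (b % m) ≤ m
  · exact ⟨-(b / m), by nlinarith⟩
  · exact ⟨-(b / m) - 1, by nlinarith⟩

namespace Matrix

section Conj

variable {n : Type*} [Fintype n]

theorem dotProduct_mulVec_transpose_mul_mul (A T : Matrix n n ℤ) (v : n → ℤ) :
    v ⬝ᵥ (Tᵀ * A * T) *ᵥ v = (T *ᵥ v) ⬝ᵥ A *ᵥ (T *ᵥ v) := by
  simp [← mulVec_mulVec, dotProduct_mulVec, vecMul_transpose]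

theorem transpose_mul_mul_apply_self [DecidableEq n] (A T : Matrix n n ℤ) (i : n) :
    (Tᵀ * A * T) i i = (T *ᵥ Pi.single i 1) ⬝ᵥ A *ᵥ (T *ᵥ Pi.single i 1) := by
  rw [← dotProduct_mulVec_transpose_mul_mul]; simp

theorem det_transpose_mul_mul_of_isUnit [DecidableEq n] (A : Matrix n n ℤ) {T : Matrix n n ℤ}
    (hT : IsUnit T.det) : (Tᵀ * A * T).det = A.det := by
  rw [det_mul, det_mul, det_transpose, mul_comm T.det, mul_assoc, Int.isUnit_mul_self hT, mul_one]

theorem mulVec_ne_zero_of_isUnit_det [DecidableEq n] {T : Matrix n n ℤ} (hT : IsUnit T.det)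
    {v : n → ℤ} (hv : v ≠ 0) : T *ᵥ v ≠ 0 := fun h ↦
  hv (mulVec_injective_of_isUnit ((isUnit_iff_isUnit_det T).2 hT) (h.trans (mulVec_zero T).symm))

theorem exists_dotProduct_mulVec_transpose_mul_mul_eq [DecidableEq n] (A : Matrix n n ℤ)
    {T : Matrix n n ℤ} (hT : IsUnit T.det) (v : n → ℤ) :
    ∃ w, w ⬝ᵥ (Tᵀ * A * T) *ᵥ w = v ⬝ᵥ A *ᵥ v := by
  obtain ⟨w, rfl⟩ := mulVec_surjective_iff_isUnit.2 ((isUnit_iff_isUnit_det T).2 hT) v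
  exact ⟨w, dotProduct_mulVec_transpose_mul_mul A T w⟩

end Conj

theorem IsSymm.dotProduct_mulVec_fin_two {B : Matrix (Fin 2) (Fin 2) ℤ} (hB : B.IsSymm)
    (w : Fin 2 → ℤ) :
    w ⬝ᵥ B *ᵥ w = B 0 0 * w 0 ^ 2 + 2 * B 0 1 * w 0 * w 1 + B 1 1 * w 1 ^ 2 := by
  simp only [dotProduct, mulVec, Fin.sum_univ_two, hB.apply 0 1]; ring

theorem IsSymm.dotProduct_mulVec_fin_three {B : Matrix (Fin 3) (Fin 3) ℤ} (hB : B.IsSymm)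
    (w : Fin 3 → ℤ) :
    w ⬝ᵥ B *ᵥ w = B 0 0 * w 0 ^ 2 + B 1 1 * w 1 ^ 2 + B 2 2 * w 2 ^ 2
      + 2 * B 0 1 * w 0 * w 1 + 2 * B 0 2 * w 0 * w 2 + 2 * B 1 2 * w 1 * w 2 := by
  simp only [dotProduct, mulVec, Fin.sum_univ_three, hB.apply 0 1, hB.apply 0 2, hB.apply 1 2]
  ring

/-- `B 0 0` times the Schur complement of the corner entry `B 0 0`. -/
def cornerComplement (B : Matrix (Fin 3) (Fin 3) ℤ) : Matrix (Fin 2) (Fin 2) ℤ :=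
  !![B 0 0 * B 1 1 - B 0 1 ^ 2, B 0 0 * B 1 2 - B 0 1 * B 0 2;
    B 0 0 * B 1 2 - B 0 1 * B 0 2, B 0 0 * B 2 2 - B 0 2 ^ 2]

theorem cornerComplement_isSymm (B : Matrix (Fin 3) (Fin 3) ℤ) : (cornerComplement B).IsSymm := by
  ext i j; fin_cases i <;> fin_cases j <;> rfl

theorem IsSymm.mul_dotProduct_mulVec_eq {B : Matrix (Fin 3) (Fin 3) ℤ} (hB : B.IsSymm)
    (w : Fin 3 → ℤ) :
    B 0 0 * (w ⬝ᵥ B *ᵥ w) = (B 0 0 * w 0 + B 0 1 * w 1 + B 0 2 * w 2) ^ 2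
      + ![w 1, w 2] ⬝ᵥ cornerComplement B *ᵥ ![w 1, w 2] := by
  rw [hB.dotProduct_mulVec_fin_three, (cornerComplement_isSymm B).dotProduct_mulVec_fin_two]
  simp only [cornerComplement, of_apply, cons_val', cons_val_zero, cons_val_one, cons_val_fin_one]
  ring

theorem IsSymm.det_cornerComplement {B : Matrix (Fin 3) (Fin 3) ℤ} (hB : B.IsSymm) :
    (cornerComplement B).det = B 0 0 * B.det := by
  simp only [cornerComplement, det_fin_two, det_fin_three, of_apply, cons_val', cons_val_zero,
    cons_val_one, cons_val_fin_one, hB.apply 0 1, hB.apply 0 2, hB.apply 1 2]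
  ring

namespace PosDef

theorem isSymm {n : Type*} {A : Matrix n n ℤ} (hA : A.PosDef) : A.IsSymm :=
  isHermitian_iff_isSymm.1 hA.isHermitian

section Minimum

variable {n : Type*} [Fintype n] {A : Matrix n n ℤ}

theorem pos_of_ne_zero (hA : A.PosDef) {v : n → ℤ} (hv : v ≠ 0) : 0 < v ⬝ᵥ A *ᵥ v := by
  simpa using hA.dotProduct_mulVec_pos hv

theorem transpose_mul_mul [DecidableEq n] (hA : A.PosDef) {T : Matrix n n ℤ}
    (hT : IsUnit T.det) : (Tᵀ * A * T).PosDef := by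
  simpa [conjTranspose_eq_transpose_of_trivial] using
    hA.conjTranspose_mul_mul_same (mulVec_injective_of_isUnit ((isUnit_iff_isUnit_det T).2 hT))

theorem exists_forall_le [Nonempty n] (hA : A.PosDef) :
    ∃ v ≠ 0, ∀ w ≠ 0, v ⬝ᵥ A *ᵥ v ≤ w ⬝ᵥ A *ᵥ w := by
  obtain ⟨_, ⟨v, hv, rfl⟩, hmin⟩ :=
    Int.exists_least_of_bdd (P := fun m ↦ ∃ v ≠ 0, v ⬝ᵥ A *ᵥ v = m)
      ⟨0, by rintro _ ⟨v, hv, rfl⟩; exact (hA.pos_of_ne_zero hv).le⟩ ⟨_, 1, one_ne_zero, rfl⟩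
  exact ⟨v, hv, fun w hw ↦ hmin _ ⟨w, hw, rfl⟩⟩

theorem isPrimitiveVector_of_forall_le (hA : A.PosDef) {v : n → ℤ} (hv : v ≠ 0)
    (hmin : ∀ w ≠ 0, v ⬝ᵥ A *ᵥ v ≤ w ⬝ᵥ A *ᵥ w) : IsPrimitiveVector v := by
  intro g hg
  choose w hw using hg
  have hvw : v = g • w := funext hw
  have hw0 : w ≠ 0 := by rintro rfl; simp [hvw] at hv
  have hg0 : g ≠ 0 := by rintro rfl; simp [hvw] at hv
  have hscale : v ⬝ᵥ A *ᵥ v = g ^ 2 * (w ⬝ᵥ A *ᵥ w) := by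
    rw [hvw, mulVec_smul, smul_dotProduct, dotProduct_smul, smul_eq_mul, smul_eq_mul]; ring
  have hle := hmin w hw0
  have hpos := hA.pos_of_ne_zero hw0
  have hg2 : g ^ 2 ≤ 1 := by nlinarith
  have hg : -1 ≤ g ∧ g ≤ 1 := ⟨by nlinarith, by nlinarith⟩
  rw [Int.isUnit_iff]
  omega

theorem exists_conj_forall_corner_le [DecidableEq n] (hA : A.PosDef) (i : n)
    (hcompl : ∀ v : n → ℤ, IsPrimitiveVector v →
      ∃ T : Matrix n n ℤ, IsUnit T.det ∧ T *ᵥ Pi.single i 1 = v) :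
    ∃ T : Matrix n n ℤ, IsUnit T.det ∧ ∀ w ≠ 0, (Tᵀ * A * T) i i ≤ w ⬝ᵥ (Tᵀ * A * T) *ᵥ w := by
  have : Nonempty n := ⟨i⟩
  obtain ⟨v, hv, hmin⟩ := hA.exists_forall_le
  obtain ⟨T, hT, hTv⟩ := hcompl v (hA.isPrimitiveVector_of_forall_le hv hmin)
  refine ⟨T, hT, fun w hw ↦ ?_⟩
  rw [transpose_mul_mul_apply_self, hTv, dotProduct_mulVec_transpose_mul_mul]
  exact hmin _ (mulVec_ne_zero_of_isUnit_det hT hw)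

end Minimum

theorem three_mul_sq_le_det_of_forall_corner_le {B : Matrix (Fin 2) (Fin 2) ℤ} (hB : B.PosDef)
    (hmin : ∀ w ≠ 0, B 0 0 ≤ w ⬝ᵥ B *ᵥ w) : 3 * B 0 0 ^ 2 ≤ 4 * B.det := by
  have hm : 0 < B 0 0 := hB.diag_pos
  obtain ⟨k, hk⟩ := exists_four_mul_sq_le (B 0 1) (B 0 0) hm
  have hval := hmin ![k, 1] (by simp)
  rw [hB.isSymm.dotProduct_mulVec_fin_two] at hval
  simp only [cons_val_zero, cons_val_one, one_pow, mul_one] at hval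
  rw [det_fin_two, hB.isSymm.apply 0 1]
  nlinarith [mul_le_mul_of_nonneg_left hval hm.le]

theorem exists_three_mul_sq_le_det_fin_two {A : Matrix (Fin 2) (Fin 2) ℤ} (hA : A.PosDef) :
    ∃ v ≠ 0, 3 * (v ⬝ᵥ A *ᵥ v) ^ 2 ≤ 4 * A.det := by
  obtain ⟨T, hT, hmin⟩ :=
    hA.exists_conj_forall_corner_le 0 fun _ hv ↦ hv.exists_isUnit_det_fin_two
  refine ⟨T *ᵥ Pi.single 0 1, mulVec_ne_zero_of_isUnit_det hT (by simp), ?_⟩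
  rw [← transpose_mul_mul_apply_self, ← det_transpose_mul_mul_of_isUnit A hT]
  exact three_mul_sq_le_det_of_forall_corner_le (hA.transpose_mul_mul hT) hmin

theorem exists_sq_add_sq_of_det_eq_one {A : Matrix (Fin 2) (Fin 2) ℤ} (hA : A.PosDef)
    (hdet : A.det = 1) (v : Fin 2 → ℤ) : ∃ x y : ℤ, v ⬝ᵥ A *ᵥ v = x ^ 2 + y ^ 2 := by
  obtain ⟨T, hT, hmin⟩ :=
    hA.exists_conj_forall_corner_le 0 fun _ hv ↦ hv.exists_isUnit_det_fin_two
  set B := Tᵀ * A * T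
  have hB : B.PosDef := hA.transpose_mul_mul hT
  have hdetB : B.det = 1 := (det_transpose_mul_mul_of_isUnit A hT).trans hdet
  have hbound := three_mul_sq_le_det_of_forall_corner_le hB hmin
  have hm : B 0 0 = 1 := by nlinarith [hB.diag_pos (i := 0)]
  rw [det_fin_two, hm, hB.isSymm.apply 0 1] at hdetB
  obtain ⟨w, hw⟩ := exists_dotProduct_mulVec_transpose_mul_mul_eq A hT v
  refine ⟨w 0 + B 0 1 * w 1, w 1, ?_⟩
  rw [← hw, hB.isSymm.dotProduct_mulVec_fin_two, hm]
  linear_combination w 1 ^ 2 * hdetB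

theorem three_mul_sq_le_cornerComplement {B : Matrix (Fin 3) (Fin 3) ℤ} (hB : B.PosDef)
    (hmin : ∀ w ≠ 0, B 0 0 ≤ w ⬝ᵥ B *ᵥ w) (y : Fin 2 → ℤ) (hy : y ≠ 0) :
    3 * B 0 0 ^ 2 ≤ 4 * (y ⬝ᵥ cornerComplement B *ᵥ y) := by
  have hm : 0 < B 0 0 := hB.diag_pos
  obtain ⟨k, hk⟩ := exists_four_mul_sq_le (B 0 1 * y 0 + B 0 2 * y 1) (B 0 0) hm
  have hval := hmin ![k, y 0, y 1] fun h ↦ hy (by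
    ext i; fin_cases i
    exacts [congrFun h 1, congrFun h 2])
  have hid := hB.isSymm.mul_dotProduct_mulVec_eq ![k, y 0, y 1]
  rw [show ![(![k, y 0, y 1] : Fin 3 → ℤ) 1, ![k, y 0, y 1] 2] = y by
    ext i; fin_cases i <;> rfl] at hid
  simp only [cons_val_zero, cons_val_one, cons_val_two, tail_cons, head_cons] at hid
  nlinarith [mul_le_mul_of_nonneg_left hval hm.le]

theorem cornerComplement_posDef {B : Matrix (Fin 3) (Fin 3) ℤ} (hB : B.PosDef)
    (hmin : ∀ w ≠ 0, B 0 0 ≤ w ⬝ᵥ B *ᵥ w) : (cornerComplement B).PosDef := by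
  refine of_dotProduct_mulVec_pos (isHermitian_iff_isSymm.2 (cornerComplement_isSymm B))
    fun y hy ↦ ?_
  have := three_mul_sq_le_cornerComplement hB hmin y hy
  have := hB.diag_pos (i := 0)
  simpa using (by nlinarith : 0 < y ⬝ᵥ cornerComplement B *ᵥ y)

theorem corner_eq_one_of_det_eq_one {B : Matrix (Fin 3) (Fin 3) ℤ} (hB : B.PosDef)
    (hmin : ∀ w ≠ 0, B 0 0 ≤ w ⬝ᵥ B *ᵥ w) (hdet : B.det = 1) : B 0 0 = 1 := by
  have hm : 0 < B 0 0 := hB.diag_pos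
  obtain ⟨y, hy, hup⟩ := exists_three_mul_sq_le_det_fin_two (cornerComplement_posDef hB hmin)
  rw [hB.isSymm.det_cornerComplement, hdet, mul_one] at hup
  have hsq : (3 * B 0 0 ^ 2) ^ 2 ≤ (4 * (y ⬝ᵥ cornerComplement B *ᵥ y)) ^ 2 :=
    pow_le_pow_left₀ (by positivity) (three_mul_sq_le_cornerComplement hB hmin y hy) 2
  have h27 : 27 * B 0 0 ^ 4 ≤ 64 * B 0 0 := by nlinarith
  by_contra hne
  have h2 : 2 ≤ B 0 0 := by omega
  nlinarith [pow_le_pow_left₀ (by norm_num) h2 3]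

theorem exists_sq_add_sq_add_sq_of_det_eq_one {A : Matrix (Fin 3) (Fin 3) ℤ} (hA : A.PosDef)
    (hdet : A.det = 1) (v : Fin 3 → ℤ) : ∃ x y z : ℤ, v ⬝ᵥ A *ᵥ v = x ^ 2 + y ^ 2 + z ^ 2 := by
  obtain ⟨T, hT, hmin⟩ :=
    hA.exists_conj_forall_corner_le 0 fun _ hv ↦ hv.exists_isUnit_det_fin_three
  set B := Tᵀ * A * T
  have hB : B.PosDef := hA.transpose_mul_mul hT
  have hdetB : B.det = 1 := (det_transpose_mul_mul_of_isUnit A hT).trans hdet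
  have hm : B 0 0 = 1 := corner_eq_one_of_det_eq_one hB hmin hdetB
  have hdetH : (cornerComplement B).det = 1 := by
    rw [hB.isSymm.det_cornerComplement, hm, hdetB, mul_one]
  obtain ⟨w, hw⟩ := exists_dotProduct_mulVec_transpose_mul_mul_eq A hT v
  obtain ⟨y, z, hyz⟩ :=
    (cornerComplement_posDef hB hmin).exists_sq_add_sq_of_det_eq_one hdetH ![w 1, w 2]
  refine ⟨w 0 + B 0 1 * w 1 + B 0 2 * w 2, y, z, ?_⟩
  have hid := hB.isSymm.mul_dotProduct_mulVec_eq w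
  rw [hm, one_mul, hyz, hw] at hid
  linear_combination hid

end PosDef

end Matrix

theorem Nat.exists_prime_eq_add_mul {q : ℕ} {a : ℤ} (hq : q ≠ 0) (h : IsCoprime a q) :
    ∃ p : ℕ, p.Prime ∧ ∃ s : ℤ, (p : ℤ) = a + q * s := by
  obtain ⟨p, -, hp, hpa⟩ := Nat.forall_exists_prime_gt_and_zmodEq 0 hq h
  obtain ⟨s, hs⟩ := hpa.symm.dvd
  exact ⟨p, hp, s, by linear_combination hs⟩

theorem jacobiSym_neg_eq_one_of_mul_modEq_one {n d : ℤ} {p : ℕ} (hn : jacobiSym (-n) p = 1)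
    (hnd : n * d ≡ 1 [ZMOD p]) : jacobiSym (-d) p = 1 := by
  have h := jacobiSym.mod_left' hnd
  rwa [← neg_mul_neg, jacobiSym.mul_left, hn, one_mul, jacobiSym.one_left] at h

theorem exists_dvd_sq_add_of_jacobiSym {p : ℕ} [Fact p.Prime] {d : ℤ}
    (h : jacobiSym (-d) p = 1) : ∃ b : ℤ, (p : ℤ) ∣ b ^ 2 + d := by
  obtain ⟨β, hβ⟩ := ZMod.isSquare_of_jacobiSym_eq_one h
  refine ⟨β.val, (ZMod.intCast_zmod_eq_zero_iff_dvd _ p).1 ?_⟩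
  push_cast
  rw [ZMod.natCast_zmod_val, sq, ← hβ]
  push_cast
  ring

theorem exists_two_mul_dvd_sq_add_of_jacobiSym {p : ℕ} [Fact p.Prime] (hp : p ≠ 2) {d : ℤ}
    (hd : Odd d) (h : jacobiSym (-d) p = 1) : ∃ b : ℤ, 2 * (p : ℤ) ∣ b ^ 2 + d := by
  have hpodd : Odd (p : ℤ) := by exact_mod_cast (Fact.out : p.Prime).odd_of_ne_two hp
  obtain ⟨b, hb⟩ := exists_dvd_sq_add_of_jacobiSym h
  -- shifting by `p` makes `b` odd, so that `b ^ 2 + d` is even as well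
  obtain ⟨c, hc, hcodd⟩ : ∃ c : ℤ, (p : ℤ) ∣ c ^ 2 + d ∧ Odd c := by
    rcases Int.even_or_odd b with hbe | hbo
    · refine ⟨b + p, ?_, hbe.add_odd hpodd⟩
      rw [show (b + p) ^ 2 + d = b ^ 2 + d + p * (2 * b + p) by ring]
      exact hb.add (dvd_mul_right _ _)
    · exact ⟨b, hb, hbo⟩
  refine ⟨c, IsCoprime.mul_dvd ?_ (hcodd.pow.add_odd hd).two_dvd hc⟩
  exact (Int.prime_two.coprime_iff_not_dvd).2 (Int.not_even_iff_odd.2 hpodd ∘ even_iff_two_dvd.2)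

theorem exists_dvd_sq_add_of_prime {n p : ℕ} {d : ℤ} (hp : p.Prime) (hnd : n * d - 1 = p)
    (hJ : jacobiSym (-n) p = 1) :
    ∃ d b : ℤ, 0 < d ∧ 0 < n * d - 1 ∧ n * d - 1 ∣ b ^ 2 + d := by
  have := Fact.mk hp
  have hp0 : (0 : ℤ) < p := by exact_mod_cast hp.pos
  obtain ⟨b, hb⟩ := exists_dvd_sq_add_of_jacobiSym
    (jacobiSym_neg_eq_one_of_mul_modEq_one (d := d) hJ
      (Int.modEq_iff_dvd.2 ⟨-1, by linear_combination -hnd⟩))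
  exact ⟨d, b, pos_of_mul_pos_right (by linarith) (Nat.cast_nonneg n), by linarith, hnd ▸ hb⟩

theorem exists_dvd_sq_add_of_two_mul_prime {n p : ℕ} {d : ℤ} (hp : p.Prime) (hp2 : p ≠ 2)
    (hnd : n * d - 1 = 2 * p) (hJ : jacobiSym (-n) p = 1) :
    ∃ d b : ℤ, 0 < d ∧ 0 < n * d - 1 ∧ n * d - 1 ∣ b ^ 2 + d := by
  have := Fact.mk hp
  have hp0 : (0 : ℤ) < p := by exact_mod_cast hp.pos
  have hdodd : Odd d := (Int.odd_mul.1 (⟨p, by linear_combination hnd⟩ : Odd ((n : ℤ) * d))).2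
  obtain ⟨b, hb⟩ := exists_two_mul_dvd_sq_add_of_jacobiSym hp2 hdodd
    (jacobiSym_neg_eq_one_of_mul_modEq_one (d := d) hJ
      (Int.modEq_iff_dvd.2 ⟨-2, by linear_combination -hnd⟩))
  exact ⟨d, b, pos_of_mul_pos_right (by linarith) (Nat.cast_nonneg n), by linarith, hnd ▸ hb⟩

theorem exists_dvd_sq_add_of_mod_four_eq_one {n : ℕ} (hn : n % 4 = 1) :
    ∃ d b : ℤ, 0 < d ∧ 0 < n * d - 1 ∧ n * d - 1 ∣ b ^ 2 + d := by
  -- `p ≡ 1 [MOD 4]` and `p ≡ -1 [MOD n]`, so `J(-n | p) = J(p | n) = J(-1 | n) = 1`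
  obtain ⟨p, hp, s, hps⟩ := Nat.exists_prime_eq_add_mul (q := 4 * n) (a := 2 * n - 1) (by omega)
    ⟨-(2 * n + 1), n, by push_cast; ring⟩
  push_cast at hps
  have hp4 : p % 4 = 1 := by
    obtain ⟨t, ht⟩ : ∃ t : ℤ, (p : ℤ) = 2 * n - 1 + 4 * t := ⟨n * s, by linear_combination hps⟩
    omega
  have hnodd : Odd n := Nat.odd_iff.2 (by omega)
  refine exists_dvd_sq_add_of_prime hp (d := 2 + 4 * s) (by linear_combination -hps) ?_
  have hpn : jacobiSym p n = jacobiSym (-1) n :=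
    jacobiSym.mod_left' (Int.modEq_iff_dvd.2 ⟨-(2 + 4 * s), by linear_combination -hps⟩)
  rw [neg_eq_neg_one_mul, jacobiSym.mul_left, jacobiSym.at_neg_one (hp.odd_of_ne_two (by omega)),
    ZMod.χ₄_nat_one_mod_four hp4, one_mul, jacobiSym.quadratic_reciprocity_one_mod_four' hnodd hp4,
    hpn, jacobiSym.at_neg_one hnodd, ZMod.χ₄_nat_one_mod_four hn]

theorem exists_dvd_sq_add_of_mod_four_eq_two {n : ℕ} (hn : n % 4 = 2) :
    ∃ d b : ℤ, 0 < d ∧ 0 < n * d - 1 ∧ n * d - 1 ∣ b ^ 2 + d := by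
  obtain ⟨m, rfl⟩ : ∃ m, n = 2 * m := ⟨n / 2, by omega⟩
  have hmodd : Odd m := Nat.odd_iff.2 (by omega)
  have hneg : (-((2 * m : ℕ) : ℤ)) = -2 * m := by push_cast; ring
  obtain ⟨j, hj⟩ | ⟨j, hj⟩ : (∃ j, m = 4 * j + 1) ∨ ∃ j, m = 4 * j + 3 :=
    (by omega : m % 4 = 1 ∨ m % 4 = 3).imp (fun _ ↦ ⟨m / 4, by omega⟩) (fun _ ↦ ⟨m / 4, by omega⟩)
  -- `p ≡ 1 [MOD 8]` and `p ≡ -1 [MOD m]`, so `J(-2m | p) = J(m | p) = J(p | m) = J(-1 | m) = 1`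
  · obtain ⟨p, hp, s, hps⟩ := Nat.exists_prime_eq_add_mul (q := 8 * m) (a := 2 * m - 1)
      (by omega) ⟨8 * j + 1, -2 * j, by subst hj; push_cast; ring⟩
    push_cast at hps
    have hp8 : p % 8 = 1 := by
      obtain ⟨t, ht⟩ : ∃ t : ℤ, (p : ℤ) = 8 * j + 1 + 8 * t :=
        ⟨m * s, by rw [hps, hj]; push_cast; ring⟩
      omega
    have hpodd : Odd p := hp.odd_of_ne_two (by omega)
    refine exists_dvd_sq_add_of_prime hp (d := 1 + 4 * s) (by push_cast; linear_combination -hps) ?_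
    have hpm : jacobiSym p m = jacobiSym (-1) m :=
      jacobiSym.mod_left' (Int.modEq_iff_dvd.2 ⟨-(2 + 8 * s), by linear_combination -hps⟩)
    rw [hneg, jacobiSym.mul_left, jacobiSym.at_neg_two hpodd, ZMod.χ₈'_nat_eq_if_mod_eight,
      if_neg (by omega), if_pos (by omega), one_mul,
      jacobiSym.quadratic_reciprocity_one_mod_four (by omega) hpodd, hpm,
      jacobiSym.at_neg_one hmodd, ZMod.χ₄_nat_one_mod_four (by omega)]
  -- `p ≡ 3 [MOD 8]` and `p ≡ -1 [MOD m]`, so `J(-2m | p) = J(m | p) = -J(p | m) = -J(-1 | m) = 1`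
  · obtain ⟨p, hp, s, hps⟩ := Nat.exists_prime_eq_add_mul (q := 8 * m) (a := 4 * m - 1)
      (by omega) ⟨48 * j + 35, -24 * j - 16, by subst hj; push_cast; ring⟩
    push_cast at hps
    have hp8 : p % 8 = 3 := by
      obtain ⟨t, ht⟩ : ∃ t : ℤ, (p : ℤ) = 16 * j + 11 + 8 * t :=
        ⟨m * s, by rw [hps, hj]; push_cast; ring⟩
      omega
    have hpodd : Odd p := hp.odd_of_ne_two (by omega)
    refine exists_dvd_sq_add_of_prime hp (d := 2 + 4 * s) (by push_cast; linear_combination -hps) ?_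
    have hpm : jacobiSym p m = jacobiSym (-1) m :=
      jacobiSym.mod_left' (Int.modEq_iff_dvd.2 ⟨-(4 + 8 * s), by linear_combination -hps⟩)
    rw [hneg, jacobiSym.mul_left, jacobiSym.at_neg_two hpodd, ZMod.χ₈'_nat_eq_if_mod_eight,
      if_neg (by omega), if_pos (by omega), one_mul,
      jacobiSym.quadratic_reciprocity_three_mod_four (by omega) (by omega), hpm,
      jacobiSym.at_neg_one hmodd, ZMod.χ₄_nat_three_mod_four (by omega), neg_neg]

theorem exists_dvd_sq_add_of_mod_eight_eq_three {n : ℕ} (hn : n % 8 = 3) :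
    ∃ d b : ℤ, 0 < d ∧ 0 < n * d - 1 ∧ n * d - 1 ∣ b ^ 2 + d := by
  obtain ⟨j, hj⟩ : ∃ j, n = 8 * j + 3 := ⟨n / 8, by omega⟩
  -- `p ≡ 1 [MOD 4]` and `2p ≡ -1 [MOD n]`, so `n d - 1 = 2p` and `J(p | n) = J(-2 | n) = 1`
  obtain ⟨p, hp, s, hps⟩ := Nat.exists_prime_eq_add_mul (q := 4 * n) (a := 4 * j + 1)
    (by omega) ⟨8 * j + 1, -j, by subst hj; push_cast; ring⟩
  push_cast at hps
  have hp4 : p % 4 = 1 := by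
    obtain ⟨t, ht⟩ : ∃ t : ℤ, (p : ℤ) = 4 * j + 1 + 4 * t := ⟨n * s, by linear_combination hps⟩
    omega
  have hnodd : Odd n := Nat.odd_iff.2 (by omega)
  have hjz : (n : ℤ) = 8 * j + 3 := by exact_mod_cast hj
  refine exists_dvd_sq_add_of_two_mul_prime hp (by omega) (d := 1 + 8 * s)
    (by linear_combination -2 * hps + hjz) ?_
  have hpn : jacobiSym p n = 1 := by
    have h := jacobiSym.mod_left' (b := n) (a₁ := -2 * p) (a₂ := 1)
      (Int.modEq_iff_dvd.2 ⟨1 + 8 * s, by linear_combination 2 * hps - hjz⟩)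
    rwa [jacobiSym.mul_left, jacobiSym.at_neg_two hnodd, ZMod.χ₈'_nat_eq_if_mod_eight,
      if_neg (by omega), if_pos (by omega), one_mul, jacobiSym.one_left] at h
  rw [neg_eq_neg_one_mul, jacobiSym.mul_left, jacobiSym.at_neg_one (hp.odd_of_ne_two (by omega)),
    ZMod.χ₄_nat_one_mod_four hp4, one_mul, jacobiSym.quadratic_reciprocity_one_mod_four' hnodd hp4,
    hpn]

theorem exists_sq_add_sq_add_sq_of_dvd {n : ℕ} {d b : ℤ} (hd : 0 < d) (hq : 0 < n * d - 1)
    (hb : n * d - 1 ∣ b ^ 2 + d) : ∃ x y z : ℤ, x ^ 2 + y ^ 2 + z ^ 2 = n := by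
  obtain ⟨c, hc⟩ := hb
  have hc0 : 0 < c := pos_of_mul_pos_right (by rw [← hc]; positivity) hq.le
  let A : Matrix (Fin 3) (Fin 3) ℤ := !![c, -b, 1; -b, n * d - 1, 0; 1, 0, n]
  have hA : A.IsSymm := by ext i j; fin_cases i <;> fin_cases j <;> rfl
  have hpos : A.PosDef := by
    refine PosDef.of_dotProduct_mulVec_pos (isHermitian_iff_isSymm.2 hA) fun v hv ↦ ?_
    have hkey : d * c * (v ⬝ᵥ A *ᵥ v) = d * (c * v 0 - b * v 1 + v 2) ^ 2
        + (d * v 1 + b * v 2) ^ 2 + c * v 2 ^ 2 := by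
      rw [hA.dotProduct_mulVec_fin_three]
      simp only [A, of_apply, cons_val', cons_val_zero, cons_val_one, cons_val, cons_val_fin_one]
      linear_combination -(d * v 1 ^ 2 + v 2 ^ 2) * hc
    suffices 0 < d * c * (v ⬝ᵥ A *ᵥ v) by simpa using pos_of_mul_pos_right this (by positivity)
    rw [hkey]
    by_contra! hle
    have hX := mul_nonneg hd.le (sq_nonneg (c * v 0 - b * v 1 + v 2))
    have hY := sq_nonneg (d * v 1 + b * v 2)
    have hZ := mul_nonneg hc0.le (sq_nonneg (v 2))
    have h2 : v 2 = 0 := by simpa [hc0.ne'] using (by linarith : c * v 2 ^ 2 = 0)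
    have h1 : v 1 = 0 := by simpa [h2, hd.ne'] using (by linarith : (d * v 1 + b * v 2) ^ 2 = 0)
    have h0 : v 0 = 0 := by
      simpa [h1, h2, hc0.ne', hd.ne'] using (by linarith : d * (c * v 0 - b * v 1 + v 2) ^ 2 = 0)
    exact hv (by ext i; fin_cases i <;> assumption)
  have hdet : A.det = 1 := by
    simp only [A, det_fin_three, of_apply, cons_val', cons_val_zero, cons_val_one, cons_val,
      cons_val_fin_one]
    linear_combination -n * hc
  obtain ⟨x, y, z, h⟩ := hpos.exists_sq_add_sq_add_sq_of_det_eq_one hdet (Pi.single 2 1)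
  exact ⟨x, y, z, by rw [← h]; simp [A]⟩

theorem exists_sq_add_sq_add_sq {n : ℕ} (hn : n % 4 = 1 ∨ n % 4 = 2 ∨ n % 8 = 3) :
    ∃ x y z : ℤ, x ^ 2 + y ^ 2 + z ^ 2 = n := by
  obtain ⟨d, b, hd, hq, hb⟩ := hn.elim exists_dvd_sq_add_of_mod_four_eq_one fun hn ↦
    hn.elim exists_dvd_sq_add_of_mod_four_eq_two exists_dvd_sq_add_of_mod_eight_eq_three
  exact exists_sq_add_sq_add_sq_of_dvd hd hq hb

/-- The norm form of `ℤ[(1 + √-15) / 2]`. -/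
def normForm (x y : ℤ) : ℤ := x ^ 2 + x * y + 4 * y ^ 2

def IsSumOfThreeNorms (m : ℤ) : Prop :=
  ∃ x₁ x₂ y₁ y₂ z₁ z₂ : ℤ, normForm x₁ x₂ + normForm y₁ y₂ + normForm z₁ z₂ = m

theorem normForm_sub_one_two (x : ℤ) : normForm (x - 1) 2 = x ^ 2 + 15 := by
  unfold normForm; ring

theorem isSumOfThreeNorms_of_sq_add_sq_add_sq {x y z m : ℤ} (h : x ^ 2 + y ^ 2 + z ^ 2 = m) :
    IsSumOfThreeNorms m :=
  ⟨x, 0, y, 0, z, 0, by simp only [normForm]; linear_combination h⟩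

theorem isSumOfThreeNorms_add_thirty {x y z m : ℤ} (h : x ^ 2 + y ^ 2 + z ^ 2 = m) :
    IsSumOfThreeNorms (m + 30) :=
  ⟨x - 1, 2, y - 1, 2, z, 0, by
    rw [normForm_sub_one_two, normForm_sub_one_two]; simp only [normForm]; linear_combination h⟩

theorem IsSumOfThreeNorms.four_mul {m : ℤ} (h : IsSumOfThreeNorms m) :
    IsSumOfThreeNorms (4 * m) := by
  obtain ⟨x₁, x₂, y₁, y₂, z₁, z₂, h⟩ := h
  exact ⟨2 * x₁, 2 * x₂, 2 * y₁, 2 * y₂, 2 * z₁, 2 * z₂, by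
    simp only [normForm] at h ⊢; linear_combination 4 * h⟩

theorem isSumOfThreeNorms_natCast (n : ℕ) : IsSumOfThreeNorms n := by
  induction n using Nat.strong_induction_on with
  | _ n ih =>
  obtain rfl | hn := Nat.eq_zero_or_pos n
  · exact isSumOfThreeNorms_of_sq_add_sq_add_sq (x := 0) (y := 0) (z := 0) (by norm_num)
  by_cases h4 : n % 4 = 0
  · have h := (ih (n / 4) (by omega)).four_mul
    rwa [show 4 * ((n / 4 : ℕ) : ℤ) = n by omega] at h
  by_cases h7 : n % 8 = 7
  · obtain rfl | rfl | rfl | hbig : n = 7 ∨ n = 15 ∨ n = 23 ∨ 31 ≤ n := by omega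
    · exact ⟨1, 1, 1, 0, 0, 0, by norm_num [normForm]⟩
    · exact ⟨-1, 2, 0, 0, 0, 0, by norm_num [normForm]⟩
    · exact ⟨1, 1, 4, 0, 1, 0, by norm_num [normForm]⟩
    · obtain ⟨x, y, z, h⟩ := exists_sq_add_sq_add_sq (n := n - 30) (by omega)
      have h := isSumOfThreeNorms_add_thirty h
      rwa [show ((n - 30 : ℕ) : ℤ) + 30 = n by omega] at h
  · obtain ⟨x, y, z, h⟩ := exists_sq_add_sq_add_sq (n := n) (by omega)
    exact isSumOfThreeNorms_of_sq_add_sq_add_sq h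

theorem stmt_16_general (n : ℕ) :
    ∃ x₁ x₂ y₁ y₂ z₁ z₂ : ℤ,
      x₁ ^ 2 + x₁ * x₂ + 4 * x₂ ^ 2 + y₁ ^ 2 + y₁ * y₂ + 4 * y₂ ^ 2 +
        z₁ ^ 2 + z₁ * z₂ + 4 * z₂ ^ 2 = (n : ℤ) := by
  obtain ⟨x₁, x₂, y₁, y₂, z₁, z₂, h⟩ := isSumOfThreeNorms_natCast n
  exact ⟨x₁, x₂, y₁, y₂, z₁, z₂, by rw [← h]; simp only [normForm]; ring⟩

theorem stmt_16 (n : ℕ) (hn : 0 < n) :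
    ∃ x₁ x₂ y₁ y₂ z₁ z₂ : ℤ,
      x₁ ^ 2 + x₁ * x₂ + 4 * x₂ ^ 2 + y₁ ^ 2 + y₁ * y₂ + 4 * y₂ ^ 2 +
        z₁ ^ 2 + z₁ * z₂ + 4 * z₂ ^ 2 = (n : ℤ) :=
  stmt_16_general n
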